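/- arXiv:2104.01143 — 2 statements merged into one kernel-verified Lean document; each statement's English description precedes it below -/
import Mathlib

section
/- Suppose there exist u₀ > 0 and v₀ > 0 with (b₁, b₂) = u₀·(1, 0) + v₀·(cos Ω, sin Ω), and let (L_J, φ_J) be the unique admissible curve that is the concatenation of one circular arc (of some radius R_a > 0 and angle Ω) and one line segment. If an admissible curve (L, φ) has maximal curvature equal to 1/R_a, then L = L_J and φ = φ_J; that is, the arc-plus-segment curve is the unique admissible curve minimizing the maximal curvature (equivalently, maximizing the minimum radius of curvature). -/
open Real

/-- `φ` is `K`-Lipschitz on `[0, L]`. -/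
def LipOn (φ : ℝ → ℝ) (L K : ℝ) : Prop :=
  ∀ s ∈ Set.Icc (0:ℝ) L, ∀ t ∈ Set.Icc (0:ℝ) L, |φ s - φ t| ≤ K * |s - t|

/-- The maximal curvature of the curve `(L, φ)`: the least Lipschitz constant of `φ`
(essential supremum of `φ'`) on `[0, L]`. -/
noncomputable def maxCurv (φ : ℝ → ℝ) (L : ℝ) : ℝ :=
  sInf {K : ℝ | 0 ≤ K ∧ LipOn φ L K}

/-- An admissible curve for the data `(Ω, b₁, b₂)` : a pair `(L, φ)` with `L > 0`,
`φ` nondecreasing and Lipschitz on `[0, L]`, `φ 0 = 0`, `φ L = Ω`,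
`∫₀^L cos (φ s) ds = b₁` and `∫₀^L sin (φ s) ds = b₂`. -/
def Admissible (Ω b₁ b₂ L : ℝ) (φ : ℝ → ℝ) : Prop :=
  0 < L ∧ MonotoneOn φ (Set.Icc 0 L) ∧ (∃ K : ℝ, 0 ≤ K ∧ LipOn φ L K) ∧
  φ 0 = 0 ∧ φ L = Ω ∧
  (∫ s in (0:ℝ)..L, Real.cos (φ s)) = b₁ ∧
  (∫ s in (0:ℝ)..L, Real.sin (φ s)) = b₂

/-- First coordinate of the associated plane curve. -/
noncomputable def xcoord (φ : ℝ → ℝ) (s : ℝ) : ℝ := ∫ t in (0:ℝ)..s, Real.cos (φ t)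

/-- Second coordinate of the associated plane curve. -/
noncomputable def ycoord (φ : ℝ → ℝ) (s : ℝ) : ℝ := ∫ t in (0:ℝ)..s, Real.sin (φ t)

/-- The curve `(L, φ)` is an arc of radius `R` and angle `Ω` followed by a
line segment of length `d` (arc at the `A`-end). -/
def ArcThenSeg (Ω R d L : ℝ) (φ : ℝ → ℝ) : Prop :=
  L = R * Ω + d ∧ ∀ s ∈ Set.Icc (0:ℝ) L, φ s = min s (R * Ω) / R

/-- The curve `(L, φ)` is a line segment of length `d` followed by an arc of
radius `R` and angle `Ω` (arc at the `B`-end). -/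
def SegThenArc (Ω R d L : ℝ) (φ : ℝ → ℝ) : Prop :=
  L = R * Ω + d ∧ ∀ s ∈ Set.Icc (0:ℝ) L, φ s = max (s - d) 0 / R

/-- The curve `(L, φ)` is the concatenation of one circular arc (radius `R`, angle `Ω`)
and one line segment (length `d`), in either order. -/
def ArcSeg (Ω R d L : ℝ) (φ : ℝ → ℝ) : Prop :=
  ArcThenSeg Ω R d L φ ∨ SegThenArc Ω R d L φ

lemma sin_lip (x y : ℝ) : |Real.sin x - Real.sin y| ≤ |x - y| := by
  rw [Real.sin_sub_sin]
  have h1 : |Real.sin ((x - y)/2)| ≤ |(x - y)/2| := Real.abs_sin_le_abs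
  have h2 : |Real.cos ((x + y)/2)| ≤ 1 := Real.abs_cos_le_one _
  calc |2 * Real.sin ((x - y)/2) * Real.cos ((x + y)/2)|
      = 2 * |Real.sin ((x-y)/2)| * |Real.cos ((x+y)/2)| := by
        rw [abs_mul, abs_mul]; norm_num
    _ ≤ 2 * |(x-y)/2| * 1 := by gcongr
    _ = |x - y| := by rw [abs_div]; rw [abs_two]; ring

lemma sin_lower {x₁ x₂ x : ℝ} (h1 : 0 ≤ x₁) (h2 : x₂ ≤ π) (hx : x ∈ Set.Icc x₁ x₂) :
    min (Real.sin x₁) (Real.sin x₂) ≤ Real.sin x := by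
  obtain ⟨ha, hb⟩ := hx
  have hpi := Real.pi_pos
  rcases le_or_gt x (π/2) with h | h
  · refine le_trans (min_le_left _ _) ?_
    exact Real.strictMonoOn_sin.monotoneOn ⟨by linarith, by linarith⟩ ⟨by linarith, h⟩ ha
  · refine le_trans (min_le_right _ _) ?_
    rw [← Real.sin_pi_sub x, ← Real.sin_pi_sub x₂]
    exact Real.strictMonoOn_sin.monotoneOn ⟨by linarith, by linarith⟩
      ⟨by linarith, by linarith⟩ (by linarith)

lemma lip_of_maxCurv {φ : ℝ → ℝ} {L : ℝ} (hne : ∃ K, 0 ≤ K ∧ LipOn φ L K) :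
    LipOn φ L (maxCurv φ L) := by
  obtain ⟨K₀, hK₀, hlip₀⟩ := hne
  intro s hs t ht
  rcases eq_or_ne s t with rfl | hst
  · simp
  · have hd : 0 < |s - t| := abs_pos.mpr (sub_ne_zero.mpr hst)
    have h1 : |φ s - φ t| / |s - t| ≤ maxCurv φ L :=
      le_csInf ⟨K₀, hK₀, hlip₀⟩ (fun K hK => (div_le_iff₀ hd).mpr (hK.2 s hs t ht))
    exact (div_le_iff₀ hd).mp h1

lemma contOn_of_lip {φ : ℝ → ℝ} {L K : ℝ} (hK : 0 ≤ K) (h : LipOn φ L K) :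
    ContinuousOn φ (Set.Icc 0 L) := by
  have hl : LipschitzOnWith (Real.toNNReal K) φ (Set.Icc 0 L) := by
    rw [lipschitzOnWith_iff_dist_le_mul]
    intro s hs t ht
    rw [Real.dist_eq, Real.dist_eq]
    calc |φ s - φ t| ≤ K * |s - t| := h s hs t ht
      _ = Real.toNNReal K * |s - t| := by rw [Real.coe_toNNReal K hK]
  exact hl.continuousOn

lemma key_arith (R m ε h Δ v I C : ℝ) (hR : 0 < R) (hm0 : 0 ≤ m) (hmv : m ≤ v)
    (hΔ0 : 0 ≤ Δ) (hΔh : Δ ≤ 1/R*h) (hh0 : 0 ≤ h) (hhδ : h ≤ ε*R^2/2)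
    (hC : C ≤ Δ * (v + Δ)) (hI : h * (v - 1/R*h) ≤ I) :
    C + (m/R)*(h - R*Δ) ≤ (1/R)*I + ε*h := by
  have hR' : R ≠ 0 := ne_of_gt hR
  have hmr : (m / R) * (h - R * Δ) = m * ((1/R)*h - Δ) := by field_simp
  have hmv2 : m * ((1/R)*h - Δ) ≤ v * ((1/R)*h - Δ) :=
    mul_le_mul_of_nonneg_right hmv (by linarith)
  have hint2 : (1/R) * (h * (v - (1/R)*h)) ≤ (1/R) * I :=
    mul_le_mul_of_nonneg_left hI (by positivity)
  have hΔsq : Δ * Δ ≤ ((1/R)*h) * ((1/R)*h) := mul_self_le_mul_self hΔ0 hΔh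
  have hhsq : ((1/R)*h) * ((1/R)*h) ≤ ε * h / 2 := by
    have h1 : h * h ≤ (ε * R^2/2) * h := mul_le_mul_of_nonneg_right hhδ hh0
    have h2 : ((1/R)*h) * ((1/R)*h) = (h*h) / R^2 := by
      rw [one_div_mul_eq_div, div_mul_div_comm, ← pow_two, ← pow_two]
    have h3 : (h*h)/R^2 ≤ ((ε * R^2/2) * h)/R^2 := by gcongr
    have h4 : ((ε * R^2/2) * h)/R^2 = ε * h / 2 := by
      rw [div_eq_iff (pow_ne_zero 2 hR')]; ring
    linarith
  rw [hmr]
  nlinarith [hC, hΔsq, hhsq, hint2, hmv2]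

lemma key (R Ω L a b m : ℝ) (φ : ℝ → ℝ) (hR : 0 < R)
    (hab : a ≤ b) (ha : 0 ≤ a) (hb : b ≤ L)
    (hmono : MonotoneOn φ (Set.Icc 0 L))
    (hlip : ∀ s ∈ Set.Icc (0:ℝ) L, ∀ t ∈ Set.Icc (0:ℝ) L, |φ s - φ t| ≤ (1/R) * |s - t|)
    (hm0 : 0 ≤ m) (hm : ∀ t ∈ Set.Icc a b, m ≤ Real.sin (Ω - φ t)) :
    Real.cos (Ω - φ b) - Real.cos (Ω - φ a) + (m / R) * ((b - a) - R * (φ b - φ a))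
      ≤ (1 / R) * ∫ t in a..b, Real.sin (Ω - φ t) := by
  have hR' : (R:ℝ) ≠ 0 := ne_of_gt hR
  have hcontφ : ContinuousOn φ (Set.Icc 0 L) := by
    have hl : LipschitzOnWith (Real.toNNReal (1/R)) φ (Set.Icc 0 L) := by
      rw [lipschitzOnWith_iff_dist_le_mul]
      intro s hs t ht
      rw [Real.dist_eq, Real.dist_eq]
      calc |φ s - φ t| ≤ (1/R) * |s - t| := hlip s hs t ht
        _ = Real.toNNReal (1/R) * |s - t| := by
            rw [Real.coe_toNNReal (1/R) (by positivity)]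
    exact hl.continuousOn
  have hcont : ContinuousOn (fun t => Real.sin (Ω - φ t)) (Set.Icc 0 L) :=
    Real.continuous_sin.comp_continuousOn (continuousOn_const.sub hcontφ)
  have hinteg : ∀ c d : ℝ, a ≤ c → c ≤ d → d ≤ b →
      IntervalIntegrable (fun t => Real.sin (Ω - φ t)) MeasureTheory.volume c d := by
    intro c d h1 h2 h3
    apply ContinuousOn.intervalIntegrable
    apply hcont.mono
    rw [Set.uIcc_of_le h2]
    intro x hx
    exact ⟨le_trans ha (le_trans h1 hx.1), le_trans hx.2 (le_trans h3 hb)⟩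
  have hmain : ∀ ε : ℝ, 0 < ε →
      Real.cos (Ω - φ b) - Real.cos (Ω - φ a) + (m / R) * ((b - a) - R * (φ b - φ a))
      ≤ (1 / R) * (∫ t in a..b, Real.sin (Ω - φ t)) + ε * (b - a) := by
    intro ε hε
    have hδ : (0:ℝ) < ε * R^2 / 2 := by positivity
    obtain ⟨N, hN⟩ := exists_nat_gt ((b - a) / (ε * R^2 / 2))
    have hN0 : 0 < (N:ℝ) := lt_of_le_of_lt (div_nonneg (by linarith) hδ.le) hN
    obtain ⟨h, hh_def⟩ : ∃ h : ℝ, h = (b - a) / N := ⟨_, rfl⟩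
    have hh0 : 0 ≤ h := by rw [hh_def]; exact div_nonneg (by linarith) hN0.le
    have hhδ : h ≤ ε * R^2 / 2 := by
      rw [hh_def, div_le_iff₀ hN0]
      rw [div_lt_iff₀ hδ] at hN
      nlinarith
    have hNh : (N:ℝ) * h = b - a := by
      rw [hh_def]; field_simp
    have main : ∀ i : ℕ, i ≤ N →
        Real.cos (Ω - φ (a + i * h)) - Real.cos (Ω - φ a)
          + (m / R) * ((i : ℝ) * h - R * (φ (a + i * h) - φ a))
        ≤ (1 / R) * (∫ t in a..(a + i * h), Real.sin (Ω - φ t)) + ε * ((i:ℝ) * h) := by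
      intro i
      induction i with
      | zero => intro _; simp
      | succ i ih =>
        intro hiN
        have hi : i ≤ N := Nat.le_of_succ_le hiN
        have prev := ih hi
        obtain ⟨s, hs_def⟩ : ∃ s : ℝ, s = a + i * h := ⟨_, rfl⟩
        obtain ⟨s', hs'_def⟩ : ∃ s' : ℝ, s' = a + ((i:ℝ) + 1) * h := ⟨_, rfl⟩
        rw [← hs_def] at prev
        have hss' : s' = s + h := by rw [hs_def, hs'_def]; ring
        have has : a ≤ s := by
          rw [hs_def]; nlinarith [Nat.cast_nonneg (α := ℝ) i]
        have hss : s ≤ s' := by rw [hss']; linarith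
        have hs'b : s' ≤ b := by
          have h1 : ((i:ℝ) + 1) ≤ (N:ℝ) := by exact_mod_cast hiN
          have h2 : ((i:ℝ) + 1) * h ≤ (N:ℝ) * h := by nlinarith
          rw [hs'_def]; linarith [hNh]
        have hsIcc : s ∈ Set.Icc (0:ℝ) L := ⟨le_trans ha has, le_trans (le_trans hss hs'b) hb⟩
        have hs'Icc : s' ∈ Set.Icc (0:ℝ) L := ⟨le_trans ha (le_trans has hss), le_trans hs'b hb⟩
        have hΔ0 : 0 ≤ φ s' - φ s := sub_nonneg.mpr (hmono hsIcc hs'Icc hss)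
        have hΔh : φ s' - φ s ≤ (1/R) * h := by
          have h1 := hlip s' hs'Icc s hsIcc
          rw [abs_of_nonneg hΔ0] at h1
          have h2 : |s' - s| = h := by
            rw [hss', abs_of_nonneg (by linarith : (0:ℝ) ≤ s + h - s)]; ring
          rw [h2] at h1; exact h1
        have hmv : m ≤ Real.sin (Ω - φ s) := hm s ⟨has, le_trans hss hs'b⟩
        have step1 : Real.cos (Ω - φ s') - Real.cos (Ω - φ s)
            = ∫ θ in (φ s)..(φ s'), Real.sin (Ω - θ) := by
          rw [intervalIntegral.integral_comp_sub_left (fun x => Real.sin x) Ω]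
          rw [integral_sin]
        have step2 : (∫ θ in (φ s)..(φ s'), Real.sin (Ω - θ))
            ≤ (φ s' - φ s) * (Real.sin (Ω - φ s) + (φ s' - φ s)) := by
          have hpt : ∀ θ ∈ Set.Icc (φ s) (φ s'),
              Real.sin (Ω - θ) ≤ Real.sin (Ω - φ s) + (φ s' - φ s) := by
            intro θ hθ
            have h1 : |Real.sin (Ω - θ) - Real.sin (Ω - φ s)| ≤ |(Ω - θ) - (Ω - φ s)| :=
              sin_lip _ _
            have h2 : |(Ω - θ) - (Ω - φ s)| = θ - φ s := by
              rw [show (Ω - θ) - (Ω - φ s) = -(θ - φ s) by ring, abs_neg,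
                abs_of_nonneg (by linarith [hθ.1])]
            rw [h2] at h1
            have h3 := (abs_le.mp h1).2
            linarith [hθ.2]
          calc (∫ θ in (φ s)..(φ s'), Real.sin (Ω - θ))
              ≤ ∫ _ in (φ s)..(φ s'), (Real.sin (Ω - φ s) + (φ s' - φ s)) := by
                apply intervalIntegral.integral_mono_on (by linarith)
                · exact (Real.continuous_sin.comp
                    (continuous_const.sub continuous_id)).intervalIntegrable _ _
                · exact intervalIntegrable_const
                · exact hpt
            _ = (φ s' - φ s) * (Real.sin (Ω - φ s) + (φ s' - φ s)) := by
                rw [intervalIntegral.integral_const, smul_eq_mul]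
        have step3 : h * (Real.sin (Ω - φ s) - (1/R) * h)
            ≤ ∫ t in s..s', Real.sin (Ω - φ t) := by
          have hpt : ∀ t ∈ Set.Icc s s',
              Real.sin (Ω - φ s) - (1/R) * h ≤ Real.sin (Ω - φ t) := by
            intro t ht
            have htIcc : t ∈ Set.Icc (0:ℝ) L :=
              ⟨le_trans hsIcc.1 ht.1, le_trans ht.2 hs'Icc.2⟩
            have h1 : |Real.sin (Ω - φ t) - Real.sin (Ω - φ s)| ≤ |(Ω - φ t) - (Ω - φ s)| :=
              sin_lip _ _
            have h2 : |(Ω - φ t) - (Ω - φ s)| = |φ t - φ s| := by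
              rw [show (Ω - φ t) - (Ω - φ s) = -(φ t - φ s) by ring, abs_neg]
            have h3 : |φ t - φ s| ≤ (1/R) * |t - s| := hlip t htIcc s hsIcc
            have h4 : |t - s| ≤ h := by
              rw [abs_of_nonneg (by linarith [ht.1])]
              have h5 := ht.2; rw [hss'] at h5; linarith
            have h6 : (1/R) * |t - s| ≤ (1/R) * h :=
              mul_le_mul_of_nonneg_left h4 (by positivity)
            rw [h2] at h1
            have h7 := (abs_le.mp h1).1
            linarith
          calc h * (Real.sin (Ω - φ s) - (1/R) * h)
              = ∫ _ in s..s', (Real.sin (Ω - φ s) - (1/R)*h) := by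
                rw [intervalIntegral.integral_const, smul_eq_mul, hss']; ring
            _ ≤ ∫ t in s..s', Real.sin (Ω - φ t) := by
                apply intervalIntegral.integral_mono_on hss intervalIntegrable_const
                  (hinteg s s' has hss hs'b) hpt
        have hadd : (∫ t in a..s', Real.sin (Ω - φ t))
            = (∫ t in a..s, Real.sin (Ω - φ t)) + ∫ t in s..s', Real.sin (Ω - φ t) :=
          (intervalIntegral.integral_add_adjacent_intervals
            (hinteg a s le_rfl has (le_trans hss hs'b))
            (hinteg s s' has hss hs'b)).symm
        have hstep : Real.cos (Ω - φ s') - Real.cos (Ω - φ s)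
            + (m / R) * (h - R * (φ s' - φ s))
            ≤ (1 / R) * (∫ t in s..s', Real.sin (Ω - φ t)) + ε * h := by
          rw [step1]
          exact key_arith R m ε h (φ s' - φ s) (Real.sin (Ω - φ s)) _ _
            hR hm0 hmv hΔ0 hΔh hh0 hhδ step2 step3
        have hmuladd : (1/R) * ((∫ t in a..s, Real.sin (Ω - φ t))
              + ∫ t in s..s', Real.sin (Ω - φ t))
            = (1/R) * (∫ t in a..s, Real.sin (Ω - φ t))
              + (1/R) * ∫ t in s..s', Real.sin (Ω - φ t) := by ring
        have hcast : ((i+1 : ℕ) : ℝ) = (i:ℝ) + 1 := by push_cast; ring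
        rw [show a + ((i+1:ℕ):ℝ) * h = s' by rw [hs'_def, hcast], hcast, hadd, hmuladd]
        have hexp1 : (m / R) * (((i:ℝ)+1) * h - R * (φ s' - φ a))
            = (m / R) * ((i:ℝ) * h - R * (φ s - φ a)) + (m / R) * (h - R * (φ s' - φ s)) := by
          ring
        have hexp2 : ε * (((i:ℝ)+1) * h) = ε * ((i:ℝ) * h) + ε * h := by ring
        rw [hexp1, hexp2]
        linarith [prev, hstep]
    have final := main N le_rfl
    rw [hNh] at final
    rw [show a + (b - a) = b by ring] at final
    exact final
  refine le_of_forall_pos_le_add ?_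
  intro η hη
  have hba : 0 ≤ b - a := by linarith
  have h1 := hmain (η / (b - a + 1)) (by positivity)
  have h2 : (η / (b - a + 1)) * (b - a) ≤ η := by
    rw [div_mul_eq_mul_div, div_le_iff₀ (by linarith)]
    nlinarith
  linarith

lemma arcIntF (R Ω d : ℝ) (hR : 0 < R) (hΩ : 0 ≤ Ω) (hd : 0 ≤ d)
    (f : ℝ → ℝ) (hf : Continuous f) :
    (∫ s in (0:ℝ)..(R*Ω+d), f (min s (R*Ω) / R))
      = R * (∫ θ in (0:ℝ)..Ω, f θ) + d * f Ω := by
  have hR' : R ≠ 0 := ne_of_gt hR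
  have hRΩ : 0 ≤ R*Ω := by positivity
  have hg : Continuous (fun s => f (min s (R*Ω) / R)) :=
    hf.comp ((continuous_id.min continuous_const).div_const R)
  have hsplit := intervalIntegral.integral_add_adjacent_intervals
    (a := (0:ℝ)) (b := R*Ω) (c := R*Ω+d)
    (hg.intervalIntegrable (μ := MeasureTheory.volume) _ _)
    (hg.intervalIntegrable (μ := MeasureTheory.volume) _ _)
  have h1 : (∫ s in (0:ℝ)..(R*Ω), f (min s (R*Ω) / R)) = R * ∫ θ in (0:ℝ)..Ω, f θ := by
    have he : Set.EqOn (fun s => f (min s (R*Ω) / R)) (fun s => f (s / R))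
        (Set.uIcc 0 (R*Ω)) := by
      intro x hx
      rw [Set.uIcc_of_le hRΩ] at hx
      simp only [min_eq_left hx.2]
    rw [intervalIntegral.integral_congr he,
      intervalIntegral.integral_comp_div (f := f) hR', smul_eq_mul,
      zero_div, mul_div_cancel_left₀ _ hR']
  have h2 : (∫ s in (R*Ω)..(R*Ω+d), f (min s (R*Ω) / R)) = d * f Ω := by
    have he : Set.EqOn (fun s => f (min s (R*Ω) / R)) (fun _ => f Ω)
        (Set.uIcc (R*Ω) (R*Ω+d)) := by
      intro x hx
      rw [Set.uIcc_of_le (by linarith)] at hx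
      simp only [min_eq_right hx.1, mul_div_cancel_left₀ _ hR']
    rw [intervalIntegral.integral_congr he, intervalIntegral.integral_const, smul_eq_mul]
    ring
  rw [← hsplit, h1, h2]

lemma segIntF (R Ω d : ℝ) (hR : 0 < R) (hΩ : 0 ≤ Ω) (hd : 0 ≤ d)
    (f : ℝ → ℝ) (hf : Continuous f) :
    (∫ s in (0:ℝ)..(R*Ω+d), f (max (s - d) 0 / R))
      = d * f 0 + R * ∫ θ in (0:ℝ)..Ω, f θ := by
  have hR' : R ≠ 0 := ne_of_gt hR
  have hRΩ : 0 ≤ R*Ω := by positivity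
  have hg : Continuous (fun s => f (max (s - d) 0 / R)) :=
    hf.comp (((continuous_id.sub continuous_const).max continuous_const).div_const R)
  have hsplit := intervalIntegral.integral_add_adjacent_intervals
    (a := (0:ℝ)) (b := d) (c := R*Ω+d)
    (hg.intervalIntegrable (μ := MeasureTheory.volume) _ _)
    (hg.intervalIntegrable (μ := MeasureTheory.volume) _ _)
  have h1 : (∫ s in (0:ℝ)..d, f (max (s-d) 0 / R)) = d * f 0 := by
    have he : Set.EqOn (fun s => f (max (s-d) 0 / R)) (fun _ => f 0) (Set.uIcc 0 d) := by
      intro x hx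
      rw [Set.uIcc_of_le hd] at hx
      simp only [max_eq_right (by linarith [hx.2] : x - d ≤ 0), zero_div]
    rw [intervalIntegral.integral_congr he, intervalIntegral.integral_const, smul_eq_mul]
    ring
  have h2 : (∫ s in d..(R*Ω+d), f (max (s-d) 0 / R)) = R * ∫ θ in (0:ℝ)..Ω, f θ := by
    have he : Set.EqOn (fun s => f (max (s-d) 0 / R)) (fun s => f ((s - d) / R))
        (Set.uIcc d (R*Ω+d)) := by
      intro x hx
      rw [Set.uIcc_of_le (by linarith)] at hx
      simp only [max_eq_left (by linarith [hx.1] : (0:ℝ) ≤ x - d)]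
    rw [intervalIntegral.integral_congr he,
      intervalIntegral.integral_comp_sub_right (f := fun s => f (s / R)) d,
      show d - d = (0:ℝ) by ring, show R*Ω+d-d = R*Ω by ring,
      intervalIntegral.integral_comp_div (f := f) hR', smul_eq_mul,
      zero_div, mul_div_cancel_left₀ _ hR']
  rw [← hsplit, h1, h2]


lemma rigid (R Ω L d : ℝ) (φ : ℝ → ℝ) (hR : 0 < R) (hΩ : 0 < Ω) (hΩπ : Ω < π)
    (hL : 0 < L) (hd : 0 ≤ d)
    (hmono : MonotoneOn φ (Set.Icc 0 L))
    (hlip : LipOn φ L (1/R))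
    (hφ0 : φ 0 = 0) (hφL : φ L = Ω)
    (h1 : (∫ s in (0:ℝ)..L, Real.sin (Ω - φ s)) = R * (1 - Real.cos Ω))
    (h2 : (∫ s in (0:ℝ)..L, Real.sin (φ s)) = R * (1 - Real.cos Ω) + d * Real.sin Ω) :
    L = R * Ω + d ∧ ∀ s ∈ Set.Icc (0:ℝ) L, φ s = min s (R*Ω) / R := by
  have hR' : R ≠ 0 := ne_of_gt hR
  have hpi := Real.pi_pos
  have hsinΩ : 0 < Real.sin Ω := Real.sin_pos_of_pos_of_lt_pi hΩ hΩπ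
  have hmem0 : (0:ℝ) ∈ Set.Icc (0:ℝ) L := ⟨le_rfl, hL.le⟩
  have hmemL : L ∈ Set.Icc (0:ℝ) L := ⟨hL.le, le_rfl⟩
  have hrange : ∀ s ∈ Set.Icc (0:ℝ) L, 0 ≤ φ s ∧ φ s ≤ Ω := by
    intro s hs
    constructor
    · have h3 := hmono hmem0 hs hs.1; rw [hφ0] at h3; exact h3
    · have h3 := hmono hs hmemL hs.2; rw [hφL] at h3; exact h3
  have hup : ∀ s ∈ Set.Icc (0:ℝ) L, R * φ s ≤ s := by
    intro s hs
    have h3 := hlip s hs 0 hmem0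
    rw [hφ0, sub_zero, sub_zero, abs_of_nonneg (hrange s hs).1, abs_of_nonneg hs.1] at h3
    rw [div_mul_eq_mul_div, one_mul] at h3
    have h4 := (le_div_iff₀ hR).mp h3
    linarith
  have hLRΩ : R * Ω ≤ L := by
    have h3 := hup L hmemL; rw [hφL] at h3; exact h3
  have hcontφ : ContinuousOn φ (Set.Icc 0 L) := contOn_of_lip (by positivity) hlip
  have hcont : ContinuousOn (fun t => Real.sin (Ω - φ t)) (Set.Icc 0 L) :=
    Real.continuous_sin.comp_continuousOn (continuousOn_const.sub hcontφ)
  have hintS : ∀ a b : ℝ, 0 ≤ a → a ≤ b → b ≤ L →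
      IntervalIntegrable (fun t => Real.sin (Ω - φ t)) MeasureTheory.volume a b := by
    intro a b h3 h4 h5
    apply ContinuousOn.intervalIntegrable
    apply hcont.mono
    rw [Set.uIcc_of_le h4]
    exact fun x hx => ⟨le_trans h3 hx.1, le_trans hx.2 h5⟩
  -- pointwise rigidity
  have hpt : ∀ s₁ ∈ Set.Icc (0:ℝ) L, φ s₁ = min s₁ (R*Ω) / R := by
    intro s₁ hs₁
    rcases eq_or_lt_of_le (hrange s₁ hs₁).2 with heq | hlt
    · have hRΩs : R * Ω ≤ s₁ := by
        have h3 := hup s₁ hs₁; rw [heq] at h3; exact h3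
      rw [min_eq_right hRΩs, mul_div_cancel_left₀ _ hR']
      exact heq
    · have hsin1 : 0 < Real.sin (Ω - φ s₁) :=
        Real.sin_pos_of_pos_of_lt_pi (by linarith) (by linarith [(hrange s₁ hs₁).1])
      have hm0 : 0 ≤ min (Real.sin (Ω - φ s₁)) (Real.sin Ω) := le_min hsin1.le hsinΩ.le
      have hmpos : 0 < min (Real.sin (Ω - φ s₁)) (Real.sin Ω) := lt_min hsin1 hsinΩ
      have hmle : ∀ t ∈ Set.Icc (0:ℝ) s₁,
          min (Real.sin (Ω - φ s₁)) (Real.sin Ω) ≤ Real.sin (Ω - φ t) := by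
        intro t ht
        have htL : t ∈ Set.Icc (0:ℝ) L := ⟨ht.1, le_trans ht.2 hs₁.2⟩
        have hmt : φ t ≤ φ s₁ := hmono htL hs₁ ht.2
        exact sin_lower (by linarith) hΩπ.le ⟨by linarith, by linarith [(hrange t htL).1]⟩
      have key1 := key R Ω L 0 s₁ (min (Real.sin (Ω - φ s₁)) (Real.sin Ω)) φ hR
        hs₁.1 le_rfl hs₁.2 hmono hlip hm0 hmle
      have hnn : ∀ t ∈ Set.Icc s₁ L, (0:ℝ) ≤ Real.sin (Ω - φ t) := by
        intro t ht
        have htL : t ∈ Set.Icc (0:ℝ) L := ⟨le_trans hs₁.1 ht.1, ht.2⟩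
        exact Real.sin_nonneg_of_nonneg_of_le_pi
          (by linarith [(hrange t htL).2]) (by linarith [(hrange t htL).1])
      have key2 := key R Ω L s₁ L 0 φ hR hs₁.2 hs₁.1 le_rfl hmono hlip le_rfl hnn
      have hadd := intervalIntegral.integral_add_adjacent_intervals
        (hintS 0 s₁ le_rfl hs₁.1 hs₁.2) (hintS s₁ L hs₁.1 hs₁.2 le_rfl)
      rw [hφ0] at key1
      rw [hφL] at key2
      rw [sub_self, Real.cos_zero] at key2
      rw [sub_zero] at key1
      have hzero : (0:ℝ) / R * ((L - s₁) - R * (Ω - φ s₁)) = 0 := by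
        rw [zero_div, zero_mul]
      rw [hzero] at key2
      have hRR : (1/R) * (R * (1 - Real.cos Ω)) = 1 - Real.cos Ω := by
        field_simp
      have hsum : 1 - Real.cos Ω
          + (min (Real.sin (Ω - φ s₁)) (Real.sin Ω) / R) * ((s₁ - 0) - R * (φ s₁ - 0))
          ≤ 1 - Real.cos Ω := by
        have h3 : (1/R) * (∫ t in (0:ℝ)..s₁, Real.sin (Ω - φ t))
            + (1/R) * (∫ t in s₁..L, Real.sin (Ω - φ t))
            = (1/R) * (R * (1 - Real.cos Ω)) := by
          rw [← mul_add, hadd, h1]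
        linarith [key1, key2, hRR.le, hRR.ge, h3.le, h3.ge]
      have hX : s₁ - R * φ s₁ ≤ 0 := by
        by_contra hc
        push_neg at hc
        have hmr : 0 < min (Real.sin (Ω - φ s₁)) (Real.sin Ω) / R := by positivity
        nlinarith [mul_pos hmr hc]
      have hXeq : R * φ s₁ = s₁ := le_antisymm (hup s₁ hs₁) (by linarith)
      have hs₁RΩ : s₁ ≤ R * Ω := by nlinarith
      rw [min_eq_left hs₁RΩ, eq_div_iff hR']
      linarith
  -- determination of L
  have hcongr : (∫ s in (0:ℝ)..L, Real.sin (φ s))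
      = ∫ s in (0:ℝ)..L, Real.sin (min s (R*Ω) / R) := by
    apply intervalIntegral.integral_congr
    intro x hx
    rw [Set.uIcc_of_le hL.le] at hx
    simp only [hpt x hx]
  have harc := arcIntF R Ω (L - R*Ω) hR hΩ.le (by linarith) Real.sin Real.continuous_sin
  rw [show R*Ω + (L - R*Ω) = L by ring] at harc
  rw [integral_sin, Real.cos_zero] at harc
  rw [hcongr, harc] at h2
  have hLd : L - R*Ω = d := by
    have h3 : (L - R*Ω) * Real.sin Ω = d * Real.sin Ω := by linarith
    exact mul_right_cancel₀ (ne_of_gt hsinΩ) h3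
  exact ⟨by linarith, hpt⟩

/-- The arc-plus-segment curve is the unique admissible curve minimizing the
maximal curvature: any admissible curve of maximal curvature `1/R_a` coincides
with `(L_J, φ_J)`. -/
theorem stmt2 (Ω b₁ b₂ u₀ v₀ R_a d L_J : ℝ) (φ_J : ℝ → ℝ)
    (hΩ : Ω ∈ Set.Ioo 0 Real.pi) (hu : 0 < u₀) (hv : 0 < v₀)
    (hb₁ : b₁ = u₀ + v₀ * Real.cos Ω) (hb₂ : b₂ = v₀ * Real.sin Ω)
    (hRa : 0 < R_a) (hd : 0 ≤ d)
    (hJ : Admissible Ω b₁ b₂ L_J φ_J) (hshape : ArcSeg Ω R_a d L_J φ_J) :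
    ∀ L : ℝ, ∀ φ : ℝ → ℝ, Admissible Ω b₁ b₂ L φ → maxCurv φ L = 1 / R_a →
      L = L_J ∧ ∀ s ∈ Set.Icc (0:ℝ) L, φ s = φ_J s := by
  obtain ⟨hΩ0, hΩπ⟩ := hΩ
  intro L φ hadm hcurv
  obtain ⟨hL, hmono, hKex, hφ0, hφL, hb1, hb2⟩ := hadm
  obtain ⟨hLJ, hmonoJ, hKexJ, hφJ0, hφJL, hbJ1, hbJ2⟩ := hJ
  have hR' : R_a ≠ 0 := ne_of_gt hRa
  have hlip : LipOn φ L (1/R_a) := by rw [← hcurv]; exact lip_of_maxCurv hKex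
  have hcontφ : ContinuousOn φ (Set.Icc 0 L) := contOn_of_lip (by positivity) hlip
  have huIcc : Set.uIcc (0:ℝ) L = Set.Icc 0 L := Set.uIcc_of_le hL.le
  have hIcos : IntervalIntegrable (fun s => Real.cos (φ s)) MeasureTheory.volume 0 L := by
    apply ContinuousOn.intervalIntegrable
    rw [huIcc]
    exact Real.continuous_cos.comp_continuousOn hcontφ
  have hIsin : IntervalIntegrable (fun s => Real.sin (φ s)) MeasureTheory.volume 0 L := by
    apply ContinuousOn.intervalIntegrable
    rw [huIcc]
    exact Real.continuous_sin.comp_continuousOn hcontφ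
  have hI : (∫ s in (0:ℝ)..L, Real.sin (Ω - φ s))
      = Real.sin Ω * b₁ - Real.cos Ω * b₂ := by
    simp only [Real.sin_sub]
    rw [intervalIntegral.integral_sub (hIcos.const_mul _) (hIsin.const_mul _),
      intervalIntegral.integral_const_mul, intervalIntegral.integral_const_mul, hb1, hb2]
  rcases hshape with ⟨hLJdef, hφJshape⟩ | ⟨hLJdef, hφJshape⟩
  · -- arc then segment
    have hLJ0 : (0:ℝ) ≤ L_J := hLJ.le
    have hcosJ : b₁ = R_a * Real.sin Ω + d * Real.cos Ω := by
      rw [← hbJ1]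
      have he : Set.EqOn (fun s => Real.cos (φ_J s))
          (fun s => Real.cos (min s (R_a*Ω) / R_a)) (Set.uIcc 0 L_J) := by
        intro x hx
        rw [Set.uIcc_of_le hLJ0] at hx
        simp only [hφJshape x hx]
      rw [intervalIntegral.integral_congr he, hLJdef,
        arcIntF R_a Ω d hRa hΩ0.le hd Real.cos Real.continuous_cos,
        integral_cos, Real.sin_zero, sub_zero]
    have hsinJ : b₂ = R_a * (1 - Real.cos Ω) + d * Real.sin Ω := by
      rw [← hbJ2]
      have he : Set.EqOn (fun s => Real.sin (φ_J s))
          (fun s => Real.sin (min s (R_a*Ω) / R_a)) (Set.uIcc 0 L_J) := by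
        intro x hx
        rw [Set.uIcc_of_le hLJ0] at hx
        simp only [hφJshape x hx]
      rw [intervalIntegral.integral_congr he, hLJdef,
        arcIntF R_a Ω d hRa hΩ0.le hd Real.sin Real.continuous_sin,
        integral_sin, Real.cos_zero]
    have h1 : (∫ s in (0:ℝ)..L, Real.sin (Ω - φ s)) = R_a * (1 - Real.cos Ω) := by
      rw [hI, hcosJ, hsinJ]
      linear_combination R_a * (Real.sin_sq_add_cos_sq Ω)
    have h2 : (∫ s in (0:ℝ)..L, Real.sin (φ s))
        = R_a * (1 - Real.cos Ω) + d * Real.sin Ω := by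
      rw [hb2, hsinJ]
    obtain ⟨hLeq, hpt⟩ := rigid R_a Ω L d φ hRa hΩ0 hΩπ hL hd hmono hlip hφ0 hφL h1 h2
    have hLL : L = L_J := by rw [hLeq, hLJdef]
    refine ⟨hLL, fun s hs => ?_⟩
    rw [hpt s hs, hφJshape s (by rw [← hLL]; exact hs)]
  · -- segment then arc
    have hLJ0 : (0:ℝ) ≤ L_J := hLJ.le
    have hcosJ : b₁ = d + R_a * Real.sin Ω := by
      rw [← hbJ1]
      have he : Set.EqOn (fun s => Real.cos (φ_J s))
          (fun s => Real.cos (max (s - d) 0 / R_a)) (Set.uIcc 0 L_J) := by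
        intro x hx
        rw [Set.uIcc_of_le hLJ0] at hx
        simp only [hφJshape x hx]
      rw [intervalIntegral.integral_congr he, hLJdef,
        segIntF R_a Ω d hRa hΩ0.le hd Real.cos Real.continuous_cos,
        integral_cos, Real.sin_zero, sub_zero, Real.cos_zero, mul_one]
    have hsinJ : b₂ = R_a * (1 - Real.cos Ω) := by
      rw [← hbJ2]
      have he : Set.EqOn (fun s => Real.sin (φ_J s))
          (fun s => Real.sin (max (s - d) 0 / R_a)) (Set.uIcc 0 L_J) := by
        intro x hx
        rw [Set.uIcc_of_le hLJ0] at hx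
        simp only [hφJshape x hx]
      rw [intervalIntegral.integral_congr he, hLJdef,
        segIntF R_a Ω d hRa hΩ0.le hd Real.sin Real.continuous_sin,
        integral_sin, Real.cos_zero, Real.sin_zero, mul_zero, zero_add]
    -- the reversed curve
    have hmonoψ : MonotoneOn (fun s => Ω - φ (L - s)) (Set.Icc 0 L) := by
      intro x hx y hy hxy
      have h3 : φ (L - y) ≤ φ (L - x) :=
        hmono ⟨by linarith [hy.2], by linarith [hy.1]⟩
          ⟨by linarith [hx.2], by linarith [hx.1]⟩ (by linarith)
      simp only []
      linarith
    have hlipψ : LipOn (fun s => Ω - φ (L - s)) L (1/R_a) := by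
      intro s hs t ht
      have h3 := hlip (L - t) ⟨by linarith [ht.2], by linarith [ht.1]⟩
        (L - s) ⟨by linarith [hs.2], by linarith [hs.1]⟩
      simp only []
      rw [show Ω - φ (L - s) - (Ω - φ (L - t)) = φ (L - t) - φ (L - s) by ring]
      rw [show (L - t) - (L - s) = s - t by ring] at h3
      rw [abs_sub_comm s t] at h3
      rw [abs_sub_comm s t]
      exact h3
    have hψ0 : (fun s => Ω - φ (L - s)) 0 = 0 := by simp only [sub_zero, hφL, sub_self]
    have hψL : (fun s => Ω - φ (L - s)) L = Ω := by simp only [sub_self, hφ0, sub_zero]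
    have hrefl : ∀ f : ℝ → ℝ, (∫ s in (0:ℝ)..L, f (L - s)) = ∫ s in (0:ℝ)..L, f s := by
      intro f
      rw [intervalIntegral.integral_comp_sub_left f L, sub_self, sub_zero]
    have h1ψ : (∫ s in (0:ℝ)..L, Real.sin (Ω - (fun s => Ω - φ (L - s)) s))
        = R_a * (1 - Real.cos Ω) := by
      simp only [sub_sub_cancel]
      rw [hrefl (fun t => Real.sin (φ t)), hb2, hsinJ]
    have h2ψ : (∫ s in (0:ℝ)..L, Real.sin ((fun s => Ω - φ (L - s)) s))
        = R_a * (1 - Real.cos Ω) + d * Real.sin Ω := by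
      simp only []
      rw [hrefl (fun t => Real.sin (Ω - φ t)), hI, hcosJ, hsinJ]
      linear_combination R_a * (Real.sin_sq_add_cos_sq Ω)
    obtain ⟨hLeq, hpt⟩ := rigid R_a Ω L d (fun s => Ω - φ (L - s)) hRa hΩ0 hΩπ hL hd
      hmonoψ hlipψ hψ0 hψL h1ψ h2ψ
    have hLL : L = L_J := by rw [hLeq, hLJdef]
    refine ⟨hLL, fun s hs => ?_⟩
    have hLs : L - s ∈ Set.Icc (0:ℝ) L := ⟨by linarith [hs.2], by linarith [hs.1]⟩
    have h3 := hpt (L - s) hLs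
    simp only [show L - (L - s) = s by ring] at h3
    -- h3 : Ω - φ s = min (L - s) (R_a * Ω) / R_a
    have h4 : φ s = Ω - min (L - s) (R_a * Ω) / R_a := by linarith
    rw [hφJshape s (by rw [← hLL]; exact hs), h4]
    rcases le_total (L - s) (R_a * Ω) with hc | hc
    · rw [min_eq_left hc, max_eq_left (by rw [hLeq] at hc; linarith : (0:ℝ) ≤ s - d)]
      rw [hLeq]
      field_simp
      ring
    · rw [min_eq_right hc, max_eq_right (by rw [hLeq] at hc; linarith : s - d ≤ (0:ℝ))]
      rw [mul_div_cancel_left₀ _ hR', zero_div, sub_self]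
end

section
/- Assume Ω ∈ (0, π/2). Let (M, θ) be an admissible curve with plane curve Z = (x̂, ŷ) and maximal curvature e, and suppose e < 1/R_a. Then M ≥ l and the quantity ζ₀ := −(x̂(l) − R_a sin Ω)·sin Ω + (ŷ(l) − R_a (1 − cos Ω))·cos Ω satisfies ζ₀ < 0. -/
/-!
Let `l = R_a Ω` and compare the curve with the arc of radius `R_a`, whose tangent angle at
arc length `s` is `s / R_a`. The quantity `ζ₀` is the component along the normal
`(-sin Ω, cos Ω)` of `Z(l) - X₀(l)`, where `X₀(l) = (R_a sin Ω, R_a (1 - cos Ω))` is the end of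
that arc; integrating its derivative gives
`ζ₀ = ∫₀^l sin (θ s - Ω) ds - ∫₀^l sin (s / R_a - Ω) ds`.
The Lipschitz bound `0 ≤ θ s ≤ e s < s / R_a ≤ Ω < π / 2` puts both angles in `[-π/2, π/2]`,
where `sin` is strictly increasing, so `ζ₀ < 0`. The same bound at `s = M` gives
`Ω = θ M ≤ e M`, hence `l < M`.
-/

open Real

open Set intervalIntegral

theorem maxCurv_nonneg (φ : ℝ → ℝ) (L : ℝ) : 0 ≤ maxCurv φ L :=
  Real.sInf_nonneg fun _ hK => hK.1

theorem lipOn_maxCurv {φ : ℝ → ℝ} {L : ℝ} (h : ∃ K, 0 ≤ K ∧ LipOn φ L K) :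
    LipOn φ L (maxCurv φ L) := by
  obtain ⟨K, hK⟩ := h
  intro s hs t ht
  rcases eq_or_ne s t with rfl | hst
  · simp
  have hpos : 0 < |s - t| := abs_pos.2 (sub_ne_zero.2 hst)
  rw [← div_le_iff₀ hpos]
  exact le_csInf ⟨K, hK⟩ fun K' hK' => (div_le_iff₀ hpos).2 (hK'.2 s hs t ht)

theorem LipOn.continuousOn {φ : ℝ → ℝ} {L K : ℝ} (h : LipOn φ L K) :
    ContinuousOn φ (Icc 0 L) := by
  refine (LipschitzOnWith.continuousOn (K := K.toNNReal) ?_)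
  refine lipschitzOnWith_iff_dist_le_mul.2 fun s hs t ht => ?_
  rw [Real.dist_eq, Real.dist_eq]
  exact (h s hs t ht).trans (mul_le_mul_of_nonneg_right (le_coe_toNNReal K) (abs_nonneg _))

theorem LipOn.le_mul_of_map_zero {φ : ℝ → ℝ} {L K s : ℝ} (h : LipOn φ L K) (h0 : φ 0 = 0)
    (hs : s ∈ Icc 0 L) : φ s ≤ K * s := by
  have := h s hs 0 (left_mem_Icc.2 (hs.1.trans hs.2))
  rw [h0, sub_zero, sub_zero, abs_of_nonneg hs.1] at this
  exact (le_abs_self _).trans this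

theorem LipOn.mem_Icc_mul_of_monotoneOn {φ : ℝ → ℝ} {L K s : ℝ} (h : LipOn φ L K)
    (hmono : MonotoneOn φ (Icc 0 L)) (h0 : φ 0 = 0) (hs : s ∈ Icc 0 L) :
    0 ≤ φ s ∧ φ s ≤ K * s :=
  ⟨h0 ▸ hmono (left_mem_Icc.2 (hs.1.trans hs.2)) hs hs.1, h.le_mul_of_map_zero h0 hs⟩

theorem integral_sin_sub_eq {φ : ℝ → ℝ} {a Ω : ℝ} (hφ : ContinuousOn φ (uIcc 0 a)) :
    ∫ s in 0..a, sin (φ s - Ω) = cos Ω * ycoord φ a - sin Ω * xcoord φ a := by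
  have hcos : IntervalIntegrable (fun s => cos (φ s)) MeasureTheory.volume 0 a :=
    (continuous_cos.comp_continuousOn hφ).intervalIntegrable
  have hsin : IntervalIntegrable (fun s => sin (φ s)) MeasureTheory.volume 0 a :=
    (continuous_sin.comp_continuousOn hφ).intervalIntegrable
  simp only [sin_sub]
  rw [integral_sub (hsin.mul_const _) (hcos.mul_const _), integral_mul_const, integral_mul_const,
    xcoord, ycoord]
  ring

theorem integral_sin_div_sub {R Ω : ℝ} (hR : R ≠ 0) :
    ∫ s in 0..R * Ω, sin (s / R - Ω) = R * (cos Ω - 1) := by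
  rw [integral_comp_div (fun u => sin (u - Ω)) hR, integral_comp_sub_right sin Ω, integral_sin,
    zero_div, mul_div_cancel_left₀ Ω hR]
  simp

theorem zeta_eq_integral_sub {φ : ℝ → ℝ} {R Ω : ℝ} (hR : R ≠ 0)
    (hφ : ContinuousOn φ (uIcc 0 (R * Ω))) :
    -(xcoord φ (R * Ω) - R * sin Ω) * sin Ω + (ycoord φ (R * Ω) - R * (1 - cos Ω)) * cos Ω
      = (∫ s in 0..R * Ω, sin (φ s - Ω)) - ∫ s in 0..R * Ω, sin (s / R - Ω) := by
  rw [integral_sin_sub_eq hφ, integral_sin_div_sub hR]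
  linear_combination R * sin_sq_add_cos_sq Ω

theorem integral_sin_lt_integral_sin {f g : ℝ → ℝ} {a b : ℝ} (hab : a < b)
    (hf : ContinuousOn f (Icc a b)) (hg : ContinuousOn g (Icc a b))
    (hf_ge : ∀ s ∈ Icc a b, -(π / 2) ≤ f s) (hg_le : ∀ s ∈ Icc a b, g s ≤ π / 2)
    (hfg : ∀ s ∈ Icc a b, f s ≤ g s) (hlt : ∃ c ∈ Icc a b, f c < g c) :
    ∫ s in a..b, sin (f s) < ∫ s in a..b, sin (g s) := by
  have hmem : ∀ s ∈ Icc a b, f s ∈ Icc (-(π / 2)) (π / 2) ∧ g s ∈ Icc (-(π / 2)) (π / 2) :=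
    fun s hs => ⟨⟨hf_ge s hs, (hfg s hs).trans (hg_le s hs)⟩,
      ⟨(hf_ge s hs).trans (hfg s hs), hg_le s hs⟩⟩
  refine integral_lt_integral_of_continuousOn_of_le_of_exists_lt hab
    (continuous_sin.comp_continuousOn hf) (continuous_sin.comp_continuousOn hg)
    (fun s hs => ?_) ?_
  · have hs' := Ioc_subset_Icc_self hs
    exact strictMonoOn_sin.monotoneOn (hmem s hs').1 (hmem s hs').2 (hfg s hs')
  · obtain ⟨c, hc, hfgc⟩ := hlt
    exact ⟨c, hc, strictMonoOn_sin (hmem c hc).1 (hmem c hc).2 hfgc⟩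

theorem stmt7_general (Ω R_a b₁ b₂ M : ℝ) (θ : ℝ → ℝ)
    (hΩ : Ω ∈ Set.Ioo 0 (Real.pi / 2)) (hRa : 0 < R_a)
    (h : Admissible Ω b₁ b₂ M θ)
    (he : maxCurv θ M < 1 / R_a) :
    R_a * Ω ≤ M ∧
    -(xcoord θ (R_a * Ω) - R_a * Real.sin Ω) * Real.sin Ω
      + (ycoord θ (R_a * Ω) - R_a * (1 - Real.cos Ω)) * Real.cos Ω < 0 := by
  obtain ⟨hΩ0, hΩπ⟩ := hΩ
  obtain ⟨hM, hmono, hLip, hθ0, hθM, -, -⟩ := h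
  have heLip := lipOn_maxCurv hLip
  have hlM : R_a * Ω < M := by
    have hΩM : Ω ≤ maxCurv θ M * M :=
      hθM ▸ heLip.le_mul_of_map_zero hθ0 (right_mem_Icc.2 hM.le)
    have heR : maxCurv θ M * R_a < 1 := (lt_div_iff₀ hRa).1 he
    nlinarith
  refine ⟨hlM.le, ?_⟩
  have hl : 0 < R_a * Ω := mul_pos hRa hΩ0
  have hsub : Icc 0 (R_a * Ω) ⊆ Icc 0 M := Icc_subset_Icc le_rfl hlM.le
  have hbound : ∀ s ∈ Icc 0 (R_a * Ω), 0 ≤ θ s ∧ θ s ≤ maxCurv θ M * s := fun s hs =>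
    heLip.mem_Icc_mul_of_monotoneOn hmono hθ0 (hsub hs)
  have hcont : ContinuousOn θ (Icc 0 (R_a * Ω)) := heLip.continuousOn.mono hsub
  rw [zeta_eq_integral_sub hRa.ne' (uIcc_of_le hl.le ▸ hcont), sub_neg]
  refine integral_sin_lt_integral_sin hl (hcont.sub continuousOn_const) (by fun_prop)
    (fun s hs => ?_) (fun s hs => ?_) (fun s hs => ?_) ⟨R_a * Ω, right_mem_Icc.2 hl.le, ?_⟩
  · linarith [(hbound s hs).1]
  · linarith [(div_le_iff₀' hRa).2 hs.2]
  · linarith [(hbound s hs).2, (mul_le_mul_of_nonneg_right he.le hs.1).trans_eq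
      (one_div_mul_eq_div R_a s)]
  · linarith [(hbound _ (right_mem_Icc.2 hl.le)).2, (mul_lt_mul_of_pos_right he hl).trans_eq
      (one_div_mul_eq_div R_a (R_a * Ω))]

/-- If `Ω ∈ (0, π/2)` and the admissible curve `(M, θ)` has maximal curvature
`e < 1/R_a`, then `M ≥ l = R_a Ω` and
`ζ₀ = −(x̂(l) − R_a sin Ω) sin Ω + (ŷ(l) − R_a (1 − cos Ω)) cos Ω < 0`. -/
theorem stmt7 (Ω R_a D b₁ b₂ M : ℝ) (θ : ℝ → ℝ)
    (hΩ : Ω ∈ Set.Ioo 0 (Real.pi / 2)) (hRa : 0 < R_a) (hD : 0 ≤ D)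
    (hb₁ : b₁ = R_a * Real.sin Ω + D * Real.cos Ω)
    (hb₂ : b₂ = R_a * (1 - Real.cos Ω) + D * Real.sin Ω)
    (h : Admissible Ω b₁ b₂ M θ)
    (he : maxCurv θ M < 1 / R_a) :
    R_a * Ω ≤ M ∧
    -(xcoord θ (R_a * Ω) - R_a * Real.sin Ω) * Real.sin Ω
      + (ycoord θ (R_a * Ω) - R_a * (1 - Real.cos Ω)) * Real.cos Ω < 0 :=
  stmt7_general Ω R_a b₁ b₂ M θ hΩ hRa h he
end
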